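/- Let G be connected with a closed labeling, and let E_1,...,E_r be the exchangeability equivalence classes with r > 1. Then the number of closed labelings of G is exactly 2·∏_{a=1}^{r} |E_a|!. -/

import Mathlib

def ClosedLabelingOf {V : Type*} {n : ℕ} (G : SimpleGraph V) (ℓ : V ≃ Fin n) : Prop :=
  ∀ u v w : V, G.Adj v u → G.Adj v w → u ≠ w →
    ((ℓ v < ℓ u ∧ ℓ v < ℓ w) ∨ (ℓ u < ℓ v ∧ ℓ w < ℓ v)) → G.Adj u w

def fullNbhd {V : Type*} (G : SimpleGraph V) (v : V) : Set V :=
  {v} ∪ G.neighborSet v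

def exchClasses {n : ℕ} (G : SimpleGraph (Fin n)) : Set (Set (Fin n)) :=
  {S | ∃ v : Fin n, S = {w : Fin n | fullNbhd G w = fullNbhd G v}}

/-!
A closed labeling of a connected graph is a proper interval ordering: if `u < v < w` and `u ~ w`,
then `u ~ v ~ w`. Hence every closed neighbourhood `N[v]` is an interval, and the non-neighbours
of `v` below it and above it are the connected components of `G - N[v]`, a description that does
not mention the labeling. Comparing two closed labelings through these components, anchored at
their first vertices (which are twins up to reversing one labeling), shows that they order the
exchangeability classes identically or oppositely. So the closed labelings are the permutations
fixing every class, possibly followed by the reversal `i ↦ n - 1 - i`; there are `∏ |E_a|!` of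
each kind, and the two kinds are disjoint once there are two classes.
-/
open Relation

variable {V : Type*} {n : ℕ} {G : SimpleGraph V}

def twinClass (G : SimpleGraph V) (v : V) : Set V :=
  {w | fullNbhd G w = fullNbhd G v}

def IsUmbrellaFree (G : SimpleGraph V) (ℓ : V ≃ Fin n) : Prop :=
  ∀ ⦃u v w⦄, G.Adj u w → ℓ u < ℓ v → ℓ v < ℓ w → G.Adj u v ∧ G.Adj v w

def AdjUp (G : SimpleGraph V) (ℓ : V ≃ Fin n) (x y : V) : Prop :=
  G.Adj x y ∧ ℓ x < ℓ y

def SameClassOrder (G : SimpleGraph V) (ℓ₁ ℓ₂ : V ≃ Fin n) : Prop :=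
  ∀ u v, fullNbhd G u ≠ fullNbhd G v → (ℓ₁ u < ℓ₁ v ↔ ℓ₂ u < ℓ₂ v)

section FullNbhd

variable {a b v x y : V}

theorem mem_fullNbhd : x ∈ fullNbhd G v ↔ x = v ∨ G.Adj v x := by
  simp [fullNbhd]

theorem self_mem_fullNbhd (v : V) : v ∈ fullNbhd G v :=
  mem_fullNbhd.2 (.inl rfl)

theorem mem_fullNbhd_comm : x ∈ fullNbhd G v ↔ v ∈ fullNbhd G x := by
  simp only [mem_fullNbhd, eq_comm, G.adj_comm]

theorem ne_of_notMem_fullNbhd (h : x ∉ fullNbhd G v) : x ≠ v := by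
  rintro rfl
  exact h (self_mem_fullNbhd x)

theorem SimpleGraph.Adj.mem_fullNbhd (h : G.Adj v x) : x ∈ fullNbhd G v :=
  _root_.mem_fullNbhd.2 (.inr h)

theorem SimpleGraph.IsClique.mem_fullNbhd (h : G.IsClique (fullNbhd G a))
    (hx : x ∈ fullNbhd G a) (hy : y ∈ fullNbhd G a) : x ∈ fullNbhd G y := by
  by_cases hxy : x = y
  · exact hxy ▸ self_mem_fullNbhd x
  · exact (h hy hx (Ne.symm hxy)).mem_fullNbhd

theorem fullNbhd_eq_of_isClique (ha : G.IsClique (fullNbhd G a))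
    (hb : G.IsClique (fullNbhd G b)) (hab : a ∈ fullNbhd G b) :
    fullNbhd G a = fullNbhd G b := by
  ext x
  exact ⟨fun hx => ha.mem_fullNbhd hx (mem_fullNbhd_comm.1 hab),
    fun hx => hb.mem_fullNbhd hx hab⟩

theorem twinClass_eq_iff : twinClass G a = twinClass G b ↔ fullNbhd G a = fullNbhd G b := by
  refine ⟨fun h => (Set.ext_iff.1 h a).1 rfl, fun h => ?_⟩
  ext x
  simp only [twinClass, Set.mem_ofPred_eq, h]

end FullNbhd

section Closed

variable {ℓ : V ≃ Fin n} {p q u v w x y : V}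

theorem ClosedLabelingOf.rev (h : ClosedLabelingOf G ℓ) :
    ClosedLabelingOf G (ℓ.trans Fin.revPerm) := by
  intro u v w hvu hvw hne hlt
  simp only [Equiv.trans_apply, Fin.revPerm_apply, Fin.rev_lt_rev] at hlt
  exact h u v w hvu hvw hne hlt.symm

theorem adjUp_rev : AdjUp G (ℓ.trans Fin.revPerm) = flip (AdjUp G ℓ) := by
  ext x y
  simp [AdjUp, flip, G.adj_comm]

theorem reflTransGen_adjUp_rev :
    ReflTransGen (AdjUp G (ℓ.trans Fin.revPerm)) x y ↔ ReflTransGen (AdjUp G ℓ) y x := by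
  rw [adjUp_rev]
  exact reflTransGen_swap

theorem Relation.ReflTransGen.le_of_adjUp (h : ReflTransGen (AdjUp G ℓ) x y) : ℓ x ≤ ℓ y := by
  induction h with
  | refl => rfl
  | tail _ hyz ih => exact ih.trans hyz.2.le

/-- Climbing an ascending path `p ⇝ q` from a higher neighbour `x` of `p`: closedness at each
vertex of the path makes `x` adjacent to the next one, until the path overtakes `x`. -/
theorem ClosedLabelingOf.fan (h : ClosedLabelingOf G ℓ) (hpq : ReflTransGen (AdjUp G ℓ) p q)
    (hpx : AdjUp G ℓ p x) : ReflTransGen (AdjUp G ℓ) x q ∨ AdjUp G ℓ q x := by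
  induction hpq using ReflTransGen.head_induction_on generalizing x with
  | refl => exact .inr hpx
  | head hpm hmq ih =>
    rename_i p m
    by_cases hxm : x = m
    · exact .inl (hxm ▸ hmq)
    have hadj : G.Adj x m := h x p m hpx.1 hpm.1 hxm (.inl ⟨hpx.2, hpm.2⟩)
    rcases lt_or_gt_of_ne (ℓ.injective.ne hxm) with hlt | hlt
    · exact .inl (.head ⟨hadj, hlt⟩ hmq)
    · exact ih ⟨hadj.symm, hlt⟩

theorem ClosedLabelingOf.reflTransGen_adjUp_or (h : ClosedLabelingOf G ℓ) (hxy : G.Reachable x y) :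
    ReflTransGen (AdjUp G ℓ) x y ∨ ReflTransGen (AdjUp G ℓ) y x := by
  obtain ⟨p⟩ := hxy
  induction p with
  | nil => exact .inl .refl
  | cons hxz _ ih =>
    rename_i x z y
    rcases lt_or_gt_of_ne (ℓ.injective.ne hxz.ne) with hlt | hlt
    · refine ih.elim (fun hzy => .inl (.head ⟨hxz, hlt⟩ hzy)) fun hyz => ?_
      have := h.rev.fan (reflTransGen_adjUp_rev.2 hyz)
        (by rw [adjUp_rev]; exact ⟨hxz, hlt⟩)
      rw [reflTransGen_adjUp_rev, adjUp_rev] at this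
      exact this.elim .inr fun hxy => .inl (.single hxy)
    · refine ih.elim (fun hzy => ?_) fun hyz => .inr (.tail hyz ⟨hxz.symm, hlt⟩)
      exact (h.fan hzy ⟨hxz.symm, hlt⟩).elim .inl fun hyx => .inr (.single hyx)

theorem ClosedLabelingOf.adj_of_lt_of_lt (h : ClosedLabelingOf G ℓ) (hconn : G.Connected)
    (huw : G.Adj u w) (huv : ℓ u < ℓ v) (hvw : ℓ v < ℓ w) : G.Adj v w := by
  have hup : ReflTransGen (AdjUp G ℓ) u v :=
    (h.reflTransGen_adjUp_or (hconn u v)).resolve_right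
      fun hvu => hvu.le_of_adjUp.not_gt huv
  refine ((h.fan hup ⟨huw, huv.trans hvw⟩).resolve_left
    fun hwv => hwv.le_of_adjUp.not_gt hvw).1

theorem ClosedLabelingOf.isUmbrellaFree (h : ClosedLabelingOf G ℓ) (hconn : G.Connected) :
    IsUmbrellaFree G ℓ := by
  refine fun u v w huw huv hvw => ⟨?_, h.adj_of_lt_of_lt hconn huw huv hvw⟩
  refine (h.rev.adj_of_lt_of_lt hconn huw.symm ?_ ?_).symm <;>
    simpa only [Equiv.trans_apply, Fin.revPerm_apply, Fin.rev_lt_rev]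

end Closed

section UmbrellaFree

variable {ℓ : V ≃ Fin n} {a u v w x y : V}

theorem IsUmbrellaFree.mem_fullNbhd_of_le_of_le (hU : IsUmbrellaFree G ℓ) (ha : a ∈ fullNbhd G v)
    (hax : ℓ a ≤ ℓ x) (hxv : ℓ x ≤ ℓ v) : x ∈ fullNbhd G v := by
  rcases hax.eq_or_lt with hax | hax
  · rwa [← ℓ.injective hax]
  rcases hxv.eq_or_lt with hxv | hxv
  · rw [ℓ.injective hxv]
    exact self_mem_fullNbhd v
  rcases mem_fullNbhd.1 ha with rfl | hva
  · exact absurd (hax.trans hxv) (lt_irrefl _)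
  · exact (hU hva.symm hax hxv).2.symm.mem_fullNbhd

theorem IsUmbrellaFree.mem_fullNbhd_of_ge_of_ge (hU : IsUmbrellaFree G ℓ) (ha : a ∈ fullNbhd G v)
    (hvx : ℓ v ≤ ℓ x) (hxa : ℓ x ≤ ℓ a) : x ∈ fullNbhd G v := by
  rcases hxa.eq_or_lt with hxa | hxa
  · rwa [ℓ.injective hxa]
  rcases hvx.eq_or_lt with hvx | hvx
  · rw [← ℓ.injective hvx]
    exact self_mem_fullNbhd v
  rcases mem_fullNbhd.1 ha with rfl | hva
  · exact absurd (hvx.trans hxa) (lt_irrefl _)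
  · exact (hU hva hvx hxa).1.mem_fullNbhd

/-- A common neighbour `v` of two non-adjacent vertices lies between them. -/
theorem IsUmbrellaFree.lt_iff_lt_of_adj_of_adj (hU : IsUmbrellaFree G ℓ) (huv : G.Adj u v)
    (hvw : G.Adj v w) (hw : w ∉ fullNbhd G u) : ℓ u < ℓ v ↔ ℓ u < ℓ w := by
  have hwu : ℓ w ≠ ℓ u := ℓ.injective.ne (ne_of_notMem_fullNbhd hw)
  constructor
  · intro huv'
    refine (lt_or_gt_of_ne hwu).resolve_left fun hwu' => hw ?_
    exact (hU hvw.symm hwu' huv').1.symm.mem_fullNbhd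
  · intro huw
    refine (lt_or_gt_of_ne (ℓ.injective.ne huv.ne)).resolve_right fun hvu => hw ?_
    exact (hU hvw hvu huw).2.mem_fullNbhd

theorem IsUmbrellaFree.fullNbhd_eq_of_le_of_le (hU : IsUmbrellaFree G ℓ)
    (huw : fullNbhd G u = fullNbhd G w) (hux : ℓ u ≤ ℓ x) (hxw : ℓ x ≤ ℓ w) :
    fullNbhd G x = fullNbhd G u := by
  have hwu : w ∈ fullNbhd G u := huw ▸ self_mem_fullNbhd w
  ext y
  constructor
  · intro hy
    rcases lt_or_ge (ℓ y) (ℓ u) with hyu | huy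
    · exact mem_fullNbhd_comm.1
        (hU.mem_fullNbhd_of_ge_of_ge (mem_fullNbhd_comm.1 hy) hyu.le hux)
    rcases le_or_gt (ℓ y) (ℓ w) with hyw | hwy
    · exact hU.mem_fullNbhd_of_ge_of_ge hwu huy hyw
    · rw [huw]
      exact mem_fullNbhd_comm.1
        (hU.mem_fullNbhd_of_le_of_le (mem_fullNbhd_comm.1 hy) hxw hwy.le)
  · intro hy
    rw [mem_fullNbhd_comm]
    rcases le_total (ℓ y) (ℓ x) with hyx | hxy
    · exact hU.mem_fullNbhd_of_ge_of_ge (mem_fullNbhd_comm.1 (huw ▸ hy : y ∈ fullNbhd G w))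
        hyx hxw
    · exact hU.mem_fullNbhd_of_le_of_le (mem_fullNbhd_comm.1 hy) hux hxy

theorem IsUmbrellaFree.lt_iff_lt_of_adj (hU : IsUmbrellaFree G ℓ) (hxy : G.Adj x y)
    (hx : x ∉ fullNbhd G v) (hy : y ∉ fullNbhd G v) : ℓ x < ℓ v ↔ ℓ y < ℓ v := by
  have hyv : ℓ y ≠ ℓ v := ℓ.injective.ne (ne_of_notMem_fullNbhd hy)
  have hxv : ℓ x ≠ ℓ v := ℓ.injective.ne (ne_of_notMem_fullNbhd hx)
  constructor
  · intro hxv'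
    refine (lt_or_gt_of_ne hyv).resolve_right fun hvy => hx ?_
    exact (hU hxy hxv' hvy).1.symm.mem_fullNbhd
  · intro hyv'
    refine (lt_or_gt_of_ne hxv).resolve_right fun hvx => hy ?_
    exact (hU hxy.symm hyv' hvx).1.symm.mem_fullNbhd

/-- Outside `N[v]`, no edge jumps over `v`. -/
theorem IsUmbrellaFree.lt_iff_lt_of_reachable (hU : IsUmbrellaFree G ℓ) {x y : ↥(fullNbhd G v)ᶜ}
    (hxy : (G.induce (fullNbhd G v)ᶜ).Reachable x y) : ℓ x < ℓ v ↔ ℓ y < ℓ v := by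
  obtain ⟨p⟩ := hxy
  induction p with
  | nil => rfl
  | @cons a b _ hab _ ih => exact (hU.lt_iff_lt_of_adj hab a.2 b.2).trans ih

end UmbrellaFree

section Reachable

variable {ℓ : V ≃ Fin n} {v x y : V}

theorem IsUmbrellaFree.reachable_of_reflTransGen (hU : IsUmbrellaFree G ℓ)
    (hxy : ReflTransGen (AdjUp G ℓ) x y) (hx : x ∉ fullNbhd G v) (hy : y ∉ fullNbhd G v)
    (hside : ℓ x < ℓ v ↔ ℓ y < ℓ v) :
    (G.induce (fullNbhd G v)ᶜ).Reachable ⟨x, hx⟩ ⟨y, hy⟩ := by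
  induction hxy using ReflTransGen.head_induction_on with
  | refl => rfl
  | head hxm hmy ih =>
    rename_i x m
    have hm : m ∉ fullNbhd G v := by
      intro hm
      rcases lt_or_gt_of_ne (ℓ.injective.ne (ne_of_notMem_fullNbhd hy)) with hyv | hvy
      · exact hy (hU.mem_fullNbhd_of_le_of_le hm hmy.le_of_adjUp hyv.le)
      · have hvx : ℓ v < ℓ x := by
          refine (lt_or_gt_of_ne (ℓ.injective.ne (ne_of_notMem_fullNbhd hx))).resolve_left ?_
          exact fun hxv => (hside.1 hxv).not_gt hvy
        exact hx (hU.mem_fullNbhd_of_ge_of_ge hm hvx.le hxm.2.le)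
    have hxm' : (G.induce (fullNbhd G v)ᶜ).Adj ⟨x, hx⟩ ⟨m, hm⟩ := hxm.1
    exact hxm'.reachable.trans (ih hm ((hU.lt_iff_lt_of_adj hxm.1 hx hm).symm.trans hside))

theorem ClosedLabelingOf.reachable_iff (h : ClosedLabelingOf G ℓ) (hconn : G.Connected)
    {x y : ↥(fullNbhd G v)ᶜ} :
    (G.induce (fullNbhd G v)ᶜ).Reachable x y ↔ (ℓ x < ℓ v ↔ ℓ y < ℓ v) := by
  have hU := h.isUmbrellaFree hconn
  refine ⟨hU.lt_iff_lt_of_reachable, fun hside => ?_⟩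
  rcases h.reflTransGen_adjUp_or (hconn x y) with hxy | hyx
  · exact hU.reachable_of_reflTransGen hxy x.2 y.2 hside
  · exact (hU.reachable_of_reflTransGen hyx y.2 x.2 hside.symm).symm

end Reachable

section Uniqueness

variable {ℓ ℓ₁ ℓ₂ : V ≃ Fin n} {a f z : V}

theorem lt_iff_lt_swap {x y : V} (h : x ≠ y) :
    (ℓ₁ x < ℓ₁ y ↔ ℓ₂ x < ℓ₂ y) ↔ (ℓ₁ y < ℓ₁ x ↔ ℓ₂ y < ℓ₂ x) := by
  have flip (ℓ : V ≃ Fin n) : ℓ y < ℓ x ↔ ¬ℓ x < ℓ y := by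
    rw [not_lt, (ℓ.injective.ne h.symm).le_iff_lt]
  rw [flip ℓ₁, flip ℓ₂, not_iff_not]

theorem ClosedLabelingOf.isClique_fullNbhd (h : ClosedLabelingOf G ℓ) (hf : ∀ x, ℓ f ≤ ℓ x) :
    G.IsClique (fullNbhd G f) := by
  intro x hx y hy hxy
  rcases mem_fullNbhd.1 hx with rfl | hfx
  · exact (mem_fullNbhd.1 hy).resolve_left (Ne.symm hxy)
  rcases mem_fullNbhd.1 hy with rfl | hfy
  · exact hfx.symm
  exact h x f y hfx hfy hxy
    (.inl ⟨(hf x).lt_of_ne (ℓ.injective.ne hfx.ne), (hf y).lt_of_ne (ℓ.injective.ne hfy.ne)⟩)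

/-- Both `f` and the ends of `ℓ₁` are simplicial, and `N[f]` cannot separate the two ends of `ℓ₁`,
since all non-neighbours of `f` lie on the same side of it for `ℓ₂`. -/
theorem ClosedLabelingOf.fullNbhd_eq_or_eq (hconn : G.Connected) (h₁ : ClosedLabelingOf G ℓ₁)
    (h₂ : ClosedLabelingOf G ℓ₂) (ha : ∀ x, ℓ₁ a ≤ ℓ₁ x) (hz : ∀ x, ℓ₁ x ≤ ℓ₁ z)
    (hf : ∀ x, ℓ₂ f ≤ ℓ₂ x) : fullNbhd G f = fullNbhd G a ∨ fullNbhd G f = fullNbhd G z := by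
  have hfc := h₂.isClique_fullNbhd hf
  by_cases haf : a ∈ fullNbhd G f
  · exact .inl (fullNbhd_eq_of_isClique (h₁.isClique_fullNbhd ha) hfc haf).symm
  by_cases hzf : z ∈ fullNbhd G f
  · refine .inr (fullNbhd_eq_of_isClique (h₁.rev.isClique_fullNbhd fun x => ?_) hfc hzf).symm
    simpa using hz x
  have hreach := (h₂.reachable_iff hconn (x := ⟨a, haf⟩) (y := ⟨z, hzf⟩)).2
    (iff_of_false (hf a).not_gt (hf z).not_gt)
  have hside := (h₁.isUmbrellaFree hconn).lt_iff_lt_of_reachable hreach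
  have haf' := (ha f).lt_of_ne (ℓ₁.injective.ne (ne_of_notMem_fullNbhd haf))
  exact ((hz f).not_gt (hside.1 haf')).elim

/-- Unless `a, f ∈ N[v]` (and then every non-neighbour of `v` comes after `v` for both labelings),
both sides say that `x` lies in the component of `G - N[v]` containing the twins `a` and `f`. -/
theorem ClosedLabelingOf.lt_iff_lt_of_notMem_fullNbhd (hconn : G.Connected)
    (h₁ : ClosedLabelingOf G ℓ₁) (h₂ : ClosedLabelingOf G ℓ₂) (ha : ∀ x, ℓ₁ a ≤ ℓ₁ x)
    (hf : ∀ x, ℓ₂ f ≤ ℓ₂ x) (haf : fullNbhd G a = fullNbhd G f) {x v : V}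
    (hx : x ∉ fullNbhd G v) : ℓ₁ x < ℓ₁ v ↔ ℓ₂ x < ℓ₂ v := by
  have hav_iff : a ∈ fullNbhd G v ↔ f ∈ fullNbhd G v := by
    rw [mem_fullNbhd_comm, haf, ← mem_fullNbhd_comm]
  by_cases hav : a ∈ fullNbhd G v
  · have hfv := hav_iff.1 hav
    exact iff_of_false
      (fun hxv => hx ((h₁.isUmbrellaFree hconn).mem_fullNbhd_of_le_of_le hav (ha x) hxv.le))
      (fun hxv => hx ((h₂.isUmbrellaFree hconn).mem_fullNbhd_of_le_of_le hfv (hf x) hxv.le))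
  have hfv : f ∉ fullNbhd G v := mt hav_iff.2 hav
  have hreach : (G.induce (fullNbhd G v)ᶜ).Reachable ⟨a, hav⟩ ⟨f, hfv⟩ := by
    rcases mem_fullNbhd.1 (haf ▸ self_mem_fullNbhd a : a ∈ fullNbhd G f) with rfl | hfa
    · rfl
    · exact SimpleGraph.Adj.reachable (G := G.induce _) hfa.symm
  have hav' := (ha v).lt_of_ne (ℓ₁.injective.ne (ne_of_notMem_fullNbhd hav))
  have hfv' := (hf v).lt_of_ne (ℓ₂.injective.ne (ne_of_notMem_fullNbhd hfv))
  calc ℓ₁ x < ℓ₁ v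
      ↔ (G.induce (fullNbhd G v)ᶜ).Reachable ⟨x, hx⟩ ⟨a, hav⟩ := by
        rw [h₁.reachable_iff hconn]; simp [hav']
    _ ↔ (G.induce (fullNbhd G v)ᶜ).Reachable ⟨x, hx⟩ ⟨f, hfv⟩ :=
        ⟨fun h => h.trans hreach, fun h => h.trans hreach.symm⟩
    _ ↔ ℓ₂ x < ℓ₂ v := by
        rw [h₂.reachable_iff hconn]; simp [hfv']

/-- For non-adjacent `u, v` this is `lt_iff_lt_of_notMem_fullNbhd`; an adjacent non-twin pair has
a vertex `w` adjacent to exactly one of them, and the middle vertex of the resulting path lies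
between its ends for both labelings. -/
theorem ClosedLabelingOf.sameClassOrder_of_fullNbhd_eq (hconn : G.Connected)
    (h₁ : ClosedLabelingOf G ℓ₁) (h₂ : ClosedLabelingOf G ℓ₂) (ha : ∀ x, ℓ₁ a ≤ ℓ₁ x)
    (hf : ∀ x, ℓ₂ f ≤ ℓ₂ x) (haf : fullNbhd G a = fullNbhd G f) : SameClassOrder G ℓ₁ ℓ₂ := by
  have key {x v : V} (hx : x ∉ fullNbhd G v) : ℓ₁ x < ℓ₁ v ↔ ℓ₂ x < ℓ₂ v :=
    h₁.lt_iff_lt_of_notMem_fullNbhd hconn h₂ ha hf haf hx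
  have hU₁ := h₁.isUmbrellaFree hconn
  have hU₂ := h₂.isUmbrellaFree hconn
  have of_adj {u v w : V} (huv : G.Adj u v) (hwv : w ∈ fullNbhd G v) (hwu : w ∉ fullNbhd G u) :
      ℓ₁ u < ℓ₁ v ↔ ℓ₂ u < ℓ₂ v := by
    have hvw : G.Adj v w := (mem_fullNbhd.1 hwv).resolve_left
      fun hwv => hwu (hwv ▸ huv.mem_fullNbhd)
    rw [hU₁.lt_iff_lt_of_adj_of_adj huv hvw hwu, hU₂.lt_iff_lt_of_adj_of_adj huv hvw hwu]
    exact (lt_iff_lt_swap (ne_of_notMem_fullNbhd hwu)).1 (key hwu)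
  intro u v huv
  by_cases hu : u ∈ fullNbhd G v
  · have hne : u ≠ v := fun h => huv (h ▸ rfl)
    have hvu : G.Adj v u := (mem_fullNbhd.1 hu).resolve_left hne
    obtain ⟨w, hw⟩ : ∃ w, ¬(w ∈ fullNbhd G u ↔ w ∈ fullNbhd G v) := by
      by_contra! h
      exact huv (Set.ext h)
    by_cases hwv : w ∈ fullNbhd G v
    · exact of_adj hvu.symm hwv fun hwu => hw (iff_of_true hwu hwv)
    · have hwu : w ∈ fullNbhd G u := by_contra fun hwu => hw (iff_of_false hwu hwv)
      exact (lt_iff_lt_swap hne).2 (of_adj hvu hwu hwv)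
  · exact key hu

theorem ClosedLabelingOf.sameClassOrder_or (hconn : G.Connected) (h₁ : ClosedLabelingOf G ℓ₁)
    (h₂ : ClosedLabelingOf G ℓ₂) :
    SameClassOrder G ℓ₁ ℓ₂ ∨ SameClassOrder G ℓ₁ (ℓ₂.trans Fin.revPerm) := by
  have : Finite V := .of_equiv _ ℓ₁.symm
  cases isEmpty_or_nonempty V
  · exact .inl fun u => isEmptyElim u
  obtain ⟨a, ha⟩ := Finite.exists_min ℓ₁
  obtain ⟨z, hz⟩ := Finite.exists_max ℓ₁
  obtain ⟨f, hf⟩ := Finite.exists_min ℓ₂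
  rcases h₁.fullNbhd_eq_or_eq hconn h₂ ha hz hf with hfa | hfz
  · exact .inl (h₁.sameClassOrder_of_fullNbhd_eq hconn h₂ ha hf hfa.symm)
  · have hrev := h₁.rev.sameClassOrder_of_fullNbhd_eq hconn h₂ (fun x => by simpa using hz x)
      hf hfz.symm
    refine .inr fun u v huv => ?_
    simpa using hrev v u (Ne.symm huv)

end Uniqueness

section Automorphism

variable {ℓ : V ≃ Fin n} {φ : V ≃ V}

theorem adj_apply_iff_of_fullNbhd_apply_eq (hφ : ∀ v, fullNbhd G (φ v) = fullNbhd G v)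
    (x y : V) : G.Adj (φ x) (φ y) ↔ G.Adj x y := by
  have adj_iff {x y : V} (hxy : x ≠ y) : G.Adj x y ↔ y ∈ fullNbhd G x := by
    simp [mem_fullNbhd, hxy.symm]
  by_cases hxy : x = y
  · simp [hxy]
  rw [adj_iff hxy, adj_iff (φ.injective.ne hxy), hφ, mem_fullNbhd_comm, hφ, mem_fullNbhd_comm]

theorem ClosedLabelingOf.of_fullNbhd_apply_eq (h : ClosedLabelingOf G ℓ)
    (hφ : ∀ v, fullNbhd G (φ v) = fullNbhd G v) : ClosedLabelingOf G (φ.trans ℓ) := by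
  have hadj := adj_apply_iff_of_fullNbhd_apply_eq hφ
  intro u v w hvu hvw huw hlt
  exact (hadj u w).1 (h (φ u) (φ v) (φ w) ((hadj v u).2 hvu) ((hadj v w).2 hvw)
    (φ.injective.ne huw) hlt)

end Automorphism

section Counting

variable {G : SimpleGraph (Fin n)}

/-- Pigeonhole: the vertices below the class of `v` are sent below `π v`, and those above it
above `π v`. -/
theorem IsUmbrellaFree.fullNbhd_apply_eq (hU : IsUmbrellaFree G (Equiv.refl _))
    {π : Fin n ≃ Fin n} (hπ : SameClassOrder G (Equiv.refl _) π) (v : Fin n) :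
    fullNbhd G (π v) = fullNbhd G v := by
  classical
  set s := Finset.univ.filter fun x => fullNbhd G x = fullNbhd G v
  have hvs : v ∈ s := by simp [s]
  obtain ⟨a, has, hamin⟩ := s.exists_min_image id ⟨v, hvs⟩
  obtain ⟨b, hbs, hbmax⟩ := s.exists_max_image id ⟨v, hvs⟩
  simp only [s, Finset.mem_filter, Finset.mem_univ, true_and, id] at has hbs hamin hbmax
  have hav : a ≤ π v := by
    have := Finset.card_le_card_of_injOn π (s := Finset.Iio a) (t := Finset.Iio (π v))
      (fun x hx => ?_) π.injective.injOn
    · rwa [Fin.card_Iio, Fin.card_Iio] at this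
    simp only [Finset.coe_Iio, Set.mem_Iio] at hx ⊢
    have hxv : fullNbhd G x ≠ fullNbhd G v := fun h => (hamin x h).not_gt hx
    exact (hπ x v hxv).1 (hx.trans_le (hamin v rfl))
  have hvb : π v ≤ b := by
    have := Finset.card_le_card_of_injOn π (s := Finset.Ioi b) (t := Finset.Ioi (π v))
      (fun x hx => ?_) π.injective.injOn
    · simp only [Fin.card_Ioi] at this
      rw [Fin.le_def]
      omega
    simp only [Finset.coe_Ioi, Set.mem_Ioi] at hx ⊢
    have hxv : fullNbhd G v ≠ fullNbhd G x := fun h => (hbmax x h.symm).not_gt hx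
    exact (hπ v x hxv).1 ((hbmax v rfl).trans_lt hx)
  exact (hU.fullNbhd_eq_of_le_of_le (has.trans hbs.symm) hav hvb).trans has

theorem IsUmbrellaFree.fullNbhd_eq_of_forall_rev (hU : IsUmbrellaFree G (Equiv.refl _))
    (hrev : ∀ v, fullNbhd G v.rev = fullNbhd G v) (u v : Fin n) :
    fullNbhd G u = fullNbhd G v := by
  have hfirst (x : Fin n) : fullNbhd G x = fullNbhd G ⟨0, x.pos⟩ :=
    hU.fullNbhd_eq_of_le_of_le (hrev _).symm (Nat.zero_le x.val) (by
      simp only [Equiv.refl_apply, Fin.le_def, Fin.val_rev]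
      omega)
  rw [hfirst u, hfirst v]

theorem closedLabelingOf_iff (hconn : G.Connected) (hG : ClosedLabelingOf G (Equiv.refl (Fin n)))
    (ℓ : Fin n ≃ Fin n) :
    ClosedLabelingOf G ℓ ↔
      (∀ v, fullNbhd G (ℓ v) = fullNbhd G v) ∨
        ∀ v, fullNbhd G ((ℓ.trans Fin.revPerm) v) = fullNbhd G v := by
  have hU := hG.isUmbrellaFree hconn
  refine ⟨fun h => (hG.sameClassOrder_or hconn h).imp hU.fullNbhd_apply_eq hU.fullNbhd_apply_eq,
    fun h => h.elim hG.of_fullNbhd_apply_eq fun hrev => ?_⟩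
  convert (hG.of_fullNbhd_apply_eq hrev).rev using 1
  ext
  simp

theorem exchClasses_eq_range (G : SimpleGraph (Fin n)) :
    exchClasses G = Set.range (twinClass G) := by
  ext S
  simp [exchClasses, twinClass, eq_comm]

theorem ncard_setOf_fullNbhd_apply_eq {V : Type*} [Finite V] (G : SimpleGraph V) :
    {π : Equiv.Perm V | ∀ v, fullNbhd G (π v) = fullNbhd G v}.ncard =
      ∏ᶠ S ∈ Set.range (twinClass G), S.ncard.factorial := by
  classical
  have : Fintype V := .ofFinite V
  have hfiber (v : V) : {x | twinClass G x = twinClass G v} = twinClass G v := by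
    ext x
    exact twinClass_eq_iff
  have hset : {π : Equiv.Perm V | ∀ v, fullNbhd G (π v) = fullNbhd G v} =
      {π : Equiv.Perm V | twinClass G ∘ π = twinClass G} := by
    ext π
    simp [funext_iff, twinClass_eq_iff]
  rw [hset, DomMulAct.stabilizer_ncard, ← finprod_eq_prod_of_fintype, finprod_mem_def]
  refine finprod_congr fun S => ?_
  rw [Set.mulIndicator_apply]
  split_ifs with hS
  · obtain ⟨v, rfl⟩ := hS
    rw [hfiber]
  · rw [show {x | twinClass G x = S} = ∅ from
      Set.eq_empty_of_forall_notMem fun x hx => hS ⟨x, hx⟩]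
    simp

end Counting

theorem card_closed_labelings {n : ℕ} (G : SimpleGraph (Fin n))
    (hconn : G.Connected) (hG : ClosedLabelingOf G (Equiv.refl (Fin n)))
    (hr : 1 < (exchClasses G).ncard) :
    {ℓ : Fin n ≃ Fin n | ClosedLabelingOf G ℓ}.ncard =
      2 * ∏ᶠ S ∈ exchClasses G, S.ncard.factorial := by
  obtain ⟨u, v, huv⟩ : ∃ u v, fullNbhd G u ≠ fullNbhd G v := by
    rw [exchClasses_eq_range, Set.one_lt_ncard_iff (Set.toFinite _)] at hr
    obtain ⟨_, _, ⟨u, rfl⟩, ⟨v, rfl⟩, hne⟩ := hr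
    exact ⟨u, v, mt twinClass_eq_iff.2 hne⟩
  set T := {π : Equiv.Perm (Fin n) | ∀ v, fullNbhd G (π v) = fullNbhd G v}
  have hrev_inj : Function.Injective fun π : Fin n ≃ Fin n => π.trans Fin.revPerm :=
    fun π σ h => Equiv.ext fun x => Fin.rev_injective (Equiv.congr_fun h x)
  have hdisj : Disjoint T ((fun π => π.trans Fin.revPerm) ⁻¹' T) := by
    refine Set.disjoint_left.2 fun π hπ hπrev => huv ?_
    refine (hG.isUmbrellaFree hconn).fullNbhd_eq_of_forall_rev (fun y => ?_) u v
    calc fullNbhd G y.rev = fullNbhd G (π.symm y) := by simpa using hπrev (π.symm y)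
      _ = fullNbhd G y := by simpa using (hπ (π.symm y)).symm
  rw [show {ℓ : Fin n ≃ Fin n | ClosedLabelingOf G ℓ} = T ∪ (fun π => π.trans Fin.revPerm) ⁻¹' T
      from Set.ext (closedLabelingOf_iff hconn hG),
    Set.ncard_union_eq hdisj, Set.ncard_preimage_of_injective_subset_range hrev_inj
      fun π _ => ⟨π.trans Fin.revPerm, by ext; simp⟩,
    ncard_setOf_fullNbhd_apply_eq, exchClasses_eq_range, two_mul]
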